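/- arXiv:2201.09226 — 8 statements merged into one kernel-verified Lean document; each statement's English description precedes it below -/
import Mathlib

section
/- Let V be a type, E : V → V → Prop a directed graph, k ∈ ℕ such that for every v ∈ V the parent set Par(v) is finite with at most k elements, and λ : V → V → ℂ a family of weights on the edges. Then the following are equivalent: (i) there exists a bounded (continuous) linear operator Λ : ℓ²(V) → ℓ²(V) such that for every u ∈ V, Λ χ_u = Σ_{v ∈ Chi(u)} (λ u v) • χ_v, the sum converging (as an unconditional/tsum limit) in ℓ²(V); (ii) sup_{v ∈ V} Σ_{u ∈ Chi(v)} ‖λ v u‖² < ∞, i.e., there exists M ≥ 0 such that for every v ∈ V the family (‖λ v u‖²)_{u ∈ Chi(v)} is summable with sum at most M. -/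
/-!
If `Λ` exists, `Λ χ_v` has coordinates `λ v ·` on `Chi(v)` and `0` elsewhere, so
`Σ_{u ∈ Chi(v)} ‖λ v u‖² = ‖Λ χ_v‖² ≤ ‖Λ‖²`. Conversely, `Λ` is the matrix operator
`(Λ x) w = Σ_{u ∈ Par(w)} λ u w • x u`. Each row has at most `k` entries, so Cauchy–Schwarz gives
`‖(Λ x) w‖² ≤ k Σ_{u ∈ Par(w)} ‖λ u w‖² ‖x u‖²`; summing over `w` column by column bounds
`‖Λ x‖²` by `k M ‖x‖²`.
-/

open scoped ENNReal
open Finset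

namespace lp

variable {ι E : Type*} [DecidableEq ι] [NormedAddCommGroup E]

theorem hasSum_subtype_single_iff {p : ℝ≥0∞} [Fact (1 ≤ p)] (hp : p ≠ ⊤) (S : Set ι)
    (c : ι → E) (x : lp (fun _ : ι => E) p) :
    HasSum (fun i : S => lp.single p (i : ι) (c i)) x ↔ ⇑x = S.indicator c := by
  have hind : S.indicator (fun i => lp.single p i (c i)) =
      fun i => lp.single p i (S.indicator c i) := by
    funext i
    by_cases hi : i ∈ S <;> simp [hi, lp.single_zero]
  change HasSum ((fun i => lp.single p i (c i)) ∘ Subtype.val) x ↔ _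
  rw [hasSum_subtype_iff_indicator, hind]
  refine ⟨fun h => funext fun j => ?_, fun h => h ▸ lp.hasSum_single hp x⟩
  have hj := h.map ((Pi.evalAddMonoidHom _ j).comp (lp.coeFnAddMonoidHom _ p))
    (lp.lipschitzWith_one_eval p j).continuous
  refine hj.unique ?_
  simp only [AddMonoidHom.coe_comp, Function.comp_def]
  simpa using hasSum_single (f := fun i => Pi.single i (S.indicator c i) j) j
    fun i hi => Pi.single_eq_of_ne' hi _

theorem hasSum_subtype_norm_sq_of_hasSum_single {S : Set ι} {c : ι → E}
    {x : lp (fun _ : ι => E) 2} (h : HasSum (fun i : S => lp.single 2 (i : ι) (c i)) x) :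
    HasSum (fun i : S => ‖c i‖ ^ 2) (‖x‖ ^ 2) := by
  have hx := lp.hasSum_norm (p := 2) (by norm_num) x
  rw [(hasSum_subtype_single_iff (by norm_num) S c x).1 h] at hx
  refine hasSum_subtype_iff_indicator (f := fun i => ‖c i‖ ^ 2).2 ?_
  convert hx using 1
  · funext i
    by_cases hi : i ∈ S <;> simp [hi]
  · simp

end lp

section RowFinite

variable {ι κ 𝕜 : Type*} [NormedField 𝕜] (P : κ → Finset ι) (A : κ → ι → 𝕜) {k : ℕ} {M : ℝ}

theorem norm_sum_mul_sq_le_card_mul (hcard : ∀ w, #(P w) ≤ k) (x : ι → 𝕜) (w : κ) :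
    ‖∑ u ∈ P w, A w u * x u‖ ^ 2 ≤ k * ∑ u ∈ P w, ‖A w u‖ ^ 2 * ‖x u‖ ^ 2 := by
  calc ‖∑ u ∈ P w, A w u * x u‖ ^ 2 ≤ (∑ u ∈ P w, ‖A w u * x u‖) ^ 2 := by
        gcongr; exact norm_sum_le _ _
    _ ≤ #(P w) * ∑ u ∈ P w, ‖A w u * x u‖ ^ 2 := sq_sum_le_card_mul_sum_sq
    _ ≤ k * ∑ u ∈ P w, ‖A w u‖ ^ 2 * ‖x u‖ ^ 2 := by
        simp_rw [norm_mul, mul_pow]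
        gcongr
        exact hcard w

theorem sum_norm_sum_mul_sq_le [DecidableEq ι] (hcard : ∀ w, #(P w) ≤ k)
    (hcol : ∀ u (S : Finset κ), (∀ w ∈ S, u ∈ P w) → ∑ w ∈ S, ‖A w u‖ ^ 2 ≤ M)
    (x : ι → 𝕜) (S : Finset κ) :
    ∑ w ∈ S, ‖∑ u ∈ P w, A w u * x u‖ ^ 2 ≤ k * M * ∑ u ∈ S.biUnion P, ‖x u‖ ^ 2 := by
  have hswap : ∑ w ∈ S, ∑ u ∈ P w, ‖A w u‖ ^ 2 * ‖x u‖ ^ 2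
      = ∑ u ∈ S.biUnion P, ‖x u‖ ^ 2 * ∑ w ∈ S with u ∈ P w, ‖A w u‖ ^ 2 := by
    rw [Finset.sum_comm' (t' := S.biUnion P) (s' := fun u => S.filter (u ∈ P ·))]
    · simp_rw [Finset.mul_sum, mul_comm]
    · intro w u
      simp only [Finset.mem_biUnion, Finset.mem_filter]
      exact ⟨fun ⟨hw, hu⟩ => ⟨⟨hw, hu⟩, w, hw, hu⟩, fun ⟨h, _⟩ => h⟩
  calc ∑ w ∈ S, ‖∑ u ∈ P w, A w u * x u‖ ^ 2
      ≤ ∑ w ∈ S, k * ∑ u ∈ P w, ‖A w u‖ ^ 2 * ‖x u‖ ^ 2 :=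
        Finset.sum_le_sum fun w _ => norm_sum_mul_sq_le_card_mul P A hcard x w
    _ = k * ∑ u ∈ S.biUnion P, ‖x u‖ ^ 2 * ∑ w ∈ S with u ∈ P w, ‖A w u‖ ^ 2 := by
        rw [← Finset.mul_sum, hswap]
    _ ≤ k * ∑ u ∈ S.biUnion P, ‖x u‖ ^ 2 * M := by
        gcongr with u
        exact hcol u _ fun w hw => (Finset.mem_filter.1 hw).2
    _ = k * M * ∑ u ∈ S.biUnion P, ‖x u‖ ^ 2 := by
        rw [← Finset.sum_mul]; ring

theorem exists_lp_two_clm_of_rowFinite (hM : 0 ≤ M) (hcard : ∀ w, #(P w) ≤ k)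
    (hcol : ∀ u (S : Finset κ), (∀ w ∈ S, u ∈ P w) → ∑ w ∈ S, ‖A w u‖ ^ 2 ≤ M) :
    ∃ T : lp (fun _ : ι => 𝕜) 2 →L[𝕜] lp (fun _ : κ => 𝕜) 2,
      ∀ x w, T x w = ∑ u ∈ P w, A w u * x u := by
  classical
  have hbound (x : lp (fun _ : ι => 𝕜) 2) (S : Finset κ) :
      ∑ w ∈ S, ‖∑ u ∈ P w, A w u * x u‖ ^ 2 ≤ k * M * ‖x‖ ^ 2 := by
    refine (sum_norm_sum_mul_sq_le P A hcard hcol x S).trans ?_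
    gcongr
    simpa using lp.sum_rpow_le_norm_rpow (p := 2) (by norm_num) x (S.biUnion P)
  let T : lp (fun _ : ι => 𝕜) 2 →ₗ[𝕜] lp (fun _ : κ => 𝕜) 2 :=
    { toFun := fun x => ⟨fun w => ∑ u ∈ P w, A w u * x u,
        memℓp_gen' (C := k * M * ‖x‖ ^ 2) fun S => by simpa using hbound x S⟩
      map_add' := fun x y => by
        ext w
        change ∑ u ∈ P w, A w u * (x u + y u) = _
        simp only [mul_add, Finset.sum_add_distrib]
        rfl
      map_smul' := fun c x => by
        ext w
        change ∑ u ∈ P w, A w u * (c * x u) = c * _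
        simp only [Finset.mul_sum, mul_left_comm] }
  refine ⟨T.mkContinuous √(k * M) fun x => ?_, fun x w => rfl⟩
  refine lp.norm_le_of_forall_sum_le (p := 2) (by norm_num) (by positivity) fun S => ?_
  simp only [ENNReal.toReal_ofNat, Real.rpow_two]
  rw [mul_pow, Real.sq_sqrt (by positivity)]
  exact hbound x S

end RowFinite

/-- Boundedness criterion for a weighted shift on a generalized directed semi-tree with
uniformly finitely many parents: the operator `Λ` with `Λ χ_u = Σ_{v ∈ Chi(u)} λ_{(u,v)} χ_v`
exists as a bounded operator on `ℓ²(V)` iff `sup_v Σ_{u ∈ Chi(v)} |λ_{(v,u)}|² < ∞`. -/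
theorem stmt_2 {V : Type*} [DecidableEq V] (E : V → V → Prop) (k : ℕ)
    (hparfin : ∀ v : V, {u | E u v}.Finite)
    (hparcard : ∀ v : V, Set.ncard {u | E u v} ≤ k)
    (lam : V → V → ℂ) :
    (∃ Λ : lp (fun _ : V => ℂ) 2 →L[ℂ] lp (fun _ : V => ℂ) 2,
        ∀ u : V,
          HasSum (fun v : {w | E u w} => lam u (v : V) • lp.single 2 (v : V) (1 : ℂ))
            (Λ (lp.single 2 u 1))) ↔
      (∃ M : ℝ, 0 ≤ M ∧ ∀ v : V,
        ∃ s : ℝ, HasSum (fun u : {w | E v w} => ‖lam v (u : V)‖ ^ 2) s ∧ s ≤ M) := by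
  simp only [← lp.single_smul, smul_eq_mul, mul_one]
  constructor
  · rintro ⟨Λ, hΛ⟩
    refine ⟨‖Λ‖ ^ 2, by positivity, fun v =>
      ⟨_, lp.hasSum_subtype_norm_sq_of_hasSum_single (hΛ v), ?_⟩⟩
    gcongr
    simpa [lp.norm_single] using Λ.le_opNorm (lp.single 2 v 1)
  · rintro ⟨M, hM, hsum⟩
    let P : V → Finset V := fun w => (hparfin w).toFinset
    have hP (u w : V) : u ∈ P w ↔ E u w := (hparfin w).mem_toFinset
    have hcard (w : V) : #(P w) ≤ k := Set.ncard_eq_toFinset_card _ (hparfin w) ▸ hparcard w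
    have hcol (u : V) (S : Finset V) (hS : ∀ w ∈ S, u ∈ P w) : ∑ w ∈ S, ‖lam u w‖ ^ 2 ≤ M := by
      obtain ⟨s, hs, hsM⟩ := hsum u
      have hle := sum_le_hasSum S (fun w _ => Set.indicator_nonneg (fun _ _ => by positivity) w)
        (hasSum_subtype_iff_indicator (f := fun w => ‖lam u w‖ ^ 2).1 hs)
      rw [Finset.sum_congr rfl fun w hw =>
        Set.indicator_of_mem (show w ∈ {w | E u w} from (hP u w).1 (hS w hw)) _] at hle
      exact hle.trans hsM
    obtain ⟨T, hT⟩ := exists_lp_two_clm_of_rowFinite P (fun w u => lam u w) hM hcard hcol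
    refine ⟨T, fun u => (lp.hasSum_subtype_single_iff (by norm_num) _ _ _).2 (funext fun w => ?_)⟩
    rw [hT]
    simp only [lp.single_apply, Pi.single_apply, mul_ite, mul_one, mul_zero, Finset.sum_ite_eq']
    by_cases h : E u w <;> simp [h, hP]
end

section
/- Let V be a type, E : V → V → Prop a directed graph, k ∈ ℕ such that for every v ∈ V the parent set Par(v) is finite with at most k elements, and β : V → ℝ with β v > 0 for all v. Then the following are equivalent: (i) there exists a bounded (continuous) linear operator T : ℓ²(V) → ℓ²(V) such that for every v ∈ V, T χ_v = Σ_{u ∈ Chi(v)} (β u / β v) • χ_u, the sum converging in ℓ²(V); (ii) sup_{v ∈ V} Σ_{u ∈ Chi(v)} (β u)² / (β v)² < ∞, i.e., there exists M ≥ 0 such that for every v the family ((β u)²/(β v)²)_{u ∈ Chi(v)} is summable with sum at most M. (This is the boundedness criterion for the multiplication operator T_{p_i} on the space of formal power series ℋ²(β), transported to ℓ²(V) via the orthonormal basis S_v/β(v) ↦ χ_v.) -/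
/-!
Both directions are read off coordinates in the basis `χ`. If `T` exists, the `w`-th
coordinate of `T χ_v` is `β w / β v` for children `w` of `v` and `0` otherwise, so
`Σ_{w ∈ Chi(v)} β(w)² / β(v)² = ‖T χ_v‖² ≤ ‖T‖²`. Conversely, the matrix of the shift has
in row `w` the entries `β w / β v`, `v ∈ Par(w)`: at most `k` of them, so by Cauchy–Schwarz
`‖(T x)_w‖² ≤ k Σ_{v ∈ Par(w)} (β w / β v)² |x_v|²`, and summing over `w` column by column
gives `‖T x‖² ≤ k M ‖x‖²`.
-/

open scoped lp

namespace WeightedShift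

variable {V 𝕜 : Type*} [RCLike 𝕜]

theorem hasSum_norm_sq (f : ℓ²(V, 𝕜)) : HasSum (fun w => ‖f w‖ ^ 2) (‖f‖ ^ 2) := by
  simpa only [ENNReal.toReal_ofNat, Real.rpow_two] using lp.hasSum_norm (by norm_num) f

theorem sum_norm_sq_le (f : ℓ²(V, 𝕜)) (F : Finset V) : ∑ w ∈ F, ‖f w‖ ^ 2 ≤ ‖f‖ ^ 2 :=
  sum_le_hasSum F (fun _ _ => by positivity) (hasSum_norm_sq f)

theorem norm_le_of_forall_sum_norm_sq_le {f : ℓ²(V, 𝕜)} {C : ℝ} (hC : 0 ≤ C)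
    (h : ∀ F : Finset V, ∑ w ∈ F, ‖f w‖ ^ 2 ≤ C ^ 2) : ‖f‖ ≤ C :=
  lp.norm_le_of_forall_sum_le (by norm_num) hC
    (by simpa only [ENNReal.toReal_ofNat, Real.rpow_two] using h)

theorem memℓp_two_of_forall_sum_norm_sq_le {f : V → 𝕜} {C : ℝ}
    (h : ∀ F : Finset V, ∑ w ∈ F, ‖f w‖ ^ 2 ≤ C) : Memℓp f 2 :=
  memℓp_gen' (by simpa only [ENNReal.toReal_ofNat, Real.rpow_two] using h)

theorem hasSum_norm_sq_subtype {s : Set V} {f : ℓ²(V, 𝕜)} (hf : ∀ w ∉ s, f w = 0) :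
    HasSum (fun u : s => ‖f u‖ ^ 2) (‖f‖ ^ 2) := by
  refine (hasSum_subtype_iff_of_support_subset fun w hw => ?_).2 (hasSum_norm_sq f)
  by_contra hws
  simp [hf w hws] at hw

theorem norm_sum_mul_sq_le {ι : Type*} (s : Finset ι) (c x : ι → 𝕜) :
    ‖∑ i ∈ s, c i * x i‖ ^ 2 ≤ s.card * ∑ i ∈ s, ‖c i‖ ^ 2 * ‖x i‖ ^ 2 :=
  calc ‖∑ i ∈ s, c i * x i‖ ^ 2 ≤ (∑ i ∈ s, ‖c i‖ * ‖x i‖) ^ 2 := by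
        gcongr
        exact (norm_sum_le _ _).trans_eq (by simp only [norm_mul])
    _ ≤ s.card * ∑ i ∈ s, (‖c i‖ * ‖x i‖) ^ 2 := sq_sum_le_card_mul_sum_sq
    _ = s.card * ∑ i ∈ s, ‖c i‖ ^ 2 * ‖x i‖ ^ 2 := by simp only [mul_pow]

def rowMulVec (P : V → Finset V) (a : V → V → 𝕜) (x : V → 𝕜) (w : V) : 𝕜 :=
  ∑ v ∈ P w, a w v * x v

section RowFinite

variable {P : V → Finset V} {a : V → V → 𝕜} {k : ℕ} {M : ℝ}

theorem sum_norm_rowMulVec_sq_le (hM : 0 ≤ M) (hcard : ∀ w, (P w).card ≤ k)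
    (hzero : ∀ w v, v ∉ P w → a w v = 0) (hcol : ∀ v (F : Finset V), ∑ w ∈ F, ‖a w v‖ ^ 2 ≤ M)
    (x : ℓ²(V, 𝕜)) (F : Finset V) :
    ∑ w ∈ F, ‖rowMulVec P a x w‖ ^ 2 ≤ k * M * ‖x‖ ^ 2 := by
  classical
  set G := F.biUnion P
  have hG : ∀ w ∈ F, ∑ v ∈ P w, ‖a w v‖ ^ 2 * ‖x v‖ ^ 2 = ∑ v ∈ G, ‖a w v‖ ^ 2 * ‖x v‖ ^ 2 :=
    fun w hw => Finset.sum_subset (Finset.subset_biUnion_of_mem P hw) fun v _ hv => by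
      simp [hzero w v hv]
  calc ∑ w ∈ F, ‖rowMulVec P a x w‖ ^ 2
      ≤ ∑ w ∈ F, k * ∑ v ∈ P w, ‖a w v‖ ^ 2 * ‖x v‖ ^ 2 := by
        refine Finset.sum_le_sum fun w _ => (norm_sum_mul_sq_le _ _ _).trans ?_
        gcongr
        exact_mod_cast hcard w
    _ = k * ∑ v ∈ G, (∑ w ∈ F, ‖a w v‖ ^ 2) * ‖x v‖ ^ 2 := by
        rw [← Finset.mul_sum, Finset.sum_congr rfl hG, Finset.sum_comm]
        simp only [Finset.sum_mul]
    _ ≤ k * ∑ v ∈ G, M * ‖x v‖ ^ 2 := by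
        gcongr with v
        exact hcol v F
    _ ≤ k * M * ‖x‖ ^ 2 := by
        rw [← Finset.mul_sum, mul_assoc]
        gcongr
        exact sum_norm_sq_le x G

theorem exists_clm_coe_eq_rowMulVec (hM : 0 ≤ M) (hcard : ∀ w, (P w).card ≤ k)
    (hzero : ∀ w v, v ∉ P w → a w v = 0) (hcol : ∀ v (F : Finset V), ∑ w ∈ F, ‖a w v‖ ^ 2 ≤ M) :
    ∃ T : ℓ²(V, 𝕜) →L[𝕜] ℓ²(V, 𝕜), ∀ x, ⇑(T x) = rowMulVec P a x := by
  have hbound := sum_norm_rowMulVec_sq_le hM hcard hzero hcol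
  let L : ℓ²(V, 𝕜) →ₗ[𝕜] ℓ²(V, 𝕜) :=
    { toFun x := ⟨rowMulVec P a x, memℓp_two_of_forall_sum_norm_sq_le (hbound x)⟩
      map_add' x y := lp.ext <| funext fun w => by
        show rowMulVec P a ⇑(x + y) w = rowMulVec P a x w + rowMulVec P a y w
        simp [rowMulVec, mul_add, Finset.sum_add_distrib]
      map_smul' c x := lp.ext <| funext fun w => by
        simp [rowMulVec, Finset.mul_sum, mul_left_comm] }
  refine ⟨L.mkContinuous √(k * M) fun x => ?_, fun x => rfl⟩
  refine norm_le_of_forall_sum_norm_sq_le (by positivity) fun F => ?_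
  rw [mul_pow, Real.sq_sqrt (by positivity)]
  exact hbound x F

variable [DecidableEq V]

theorem rowMulVec_single (hzero : ∀ w v, v ∉ P w → a w v = 0) (v w : V) :
    rowMulVec P a (lp.single 2 v (1 : 𝕜)) w = a w v := by
  by_cases hv : v ∈ P w
  · simp [rowMulVec, Pi.single_apply, hv]
  · simp [rowMulVec, Pi.single_apply, hv, hzero w v hv]

end RowFinite

theorem hasSum_smul_single_iff [DecidableEq V] {s : Set V} {c : s → 𝕜} {f : ℓ²(V, 𝕜)} :
    HasSum (fun u : s => c u • lp.single 2 (u : V) (1 : 𝕜)) f ↔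
      (∀ u : s, f u = c u) ∧ ∀ w ∉ s, f w = 0 := by
  constructor
  · intro h
    have hcoord (w : V) :
        HasSum (fun u : s => c u * Pi.single (M := fun _ : V => 𝕜) (u : V) 1 w) (f w) := by
      simpa only [map_smul, lp.evalCLM, LinearMap.mkContinuous_apply, lp.evalₗ_apply,
        lp.coeFn_single, smul_eq_mul] using (lp.evalCLM 𝕜 (fun _ : V => 𝕜) 2 w).hasSum h
    refine ⟨fun u => (hcoord u).unique ?_, fun w hw => (hcoord w).unique ?_⟩
    · convert hasSum_ite_eq u (c u) using 2 with u'
      obtain rfl | hu := eq_or_ne u' u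
      · simp
      · simp [hu, Subtype.val_injective.ne hu.symm]
    · convert hasSum_zero using 2 with u
      simp [ne_of_mem_of_not_mem u.2 hw]
  · rintro ⟨hc, hzero⟩
    have h := (hasSum_subtype_iff_of_support_subset (s := s)
      (f := fun w => lp.single 2 w (f w)) fun w hw => ?_).2 (lp.hasSum_single (by simp) f)
    · convert h using 2 with u
      rw [Function.comp_apply, hc, ← lp.single_smul, smul_eq_mul, mul_one]
    · by_contra hws
      simp [hzero w hws] at hw

end WeightedShift

open WeightedShift in
theorem stmt_3_general {V : Type*} [DecidableEq V] (E : V → V → Prop) (k : ℕ)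
    (hparfin : ∀ v : V, {u | E u v}.Finite)
    (hparcard : ∀ v : V, Set.ncard {u | E u v} ≤ k)
    (β : V → ℝ) :
    (∃ T : lp (fun _ : V => ℂ) 2 →L[ℂ] lp (fun _ : V => ℂ) 2,
        ∀ v : V,
          HasSum
            (fun u : {w | E v w} => ((β (u : V) / β v : ℝ) : ℂ) • lp.single 2 (u : V) (1 : ℂ))
            (T (lp.single 2 v 1))) ↔
      (∃ M : ℝ, 0 ≤ M ∧ ∀ v : V,
        ∃ s : ℝ, HasSum (fun u : {w | E v w} => (β (u : V)) ^ 2 / (β v) ^ 2) s ∧ s ≤ M) := by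
  constructor
  · rintro ⟨T, hT⟩
    have hnorm (v w : V) : ‖((β w / β v : ℝ) : ℂ)‖ ^ 2 = β w ^ 2 / β v ^ 2 := by
      rw [Complex.norm_real, Real.norm_eq_abs, sq_abs, div_pow]
    refine ⟨‖T‖ ^ 2, by positivity, fun v => ⟨‖T (lp.single 2 v 1)‖ ^ 2, ?_, ?_⟩⟩
    · obtain ⟨hc, hzero⟩ := hasSum_smul_single_iff.1 (hT v)
      simpa only [hc, hnorm] using hasSum_norm_sq_subtype hzero
    · gcongr
      simpa using T.le_opNorm (lp.single 2 v (1 : ℂ))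
  · rintro ⟨M, hM, hsum⟩
    classical
    let a : V → V → ℂ := fun w v => if E v w then ((β w / β v : ℝ) : ℂ) else 0
    have hzero (w v : V) (hv : v ∉ (hparfin w).toFinset) : a w v = 0 := by simp_all [a]
    have hcard (w : V) : (hparfin w).toFinset.card ≤ k :=
      Set.ncard_eq_toFinset_card _ (hparfin w) ▸ hparcard w
    have hcol (v : V) (F : Finset V) : ∑ w ∈ F, ‖a w v‖ ^ 2 ≤ M := by
      obtain ⟨s, hs, hsM⟩ := hsum v
      calc ∑ w ∈ F, ‖a w v‖ ^ 2
          = ∑ w ∈ F, {w | E v w}.indicator (fun w => β w ^ 2 / β v ^ 2) w :=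
            Finset.sum_congr rfl fun w _ => by by_cases h : E v w <;> simp [a, h, div_pow]
        _ ≤ s := sum_le_hasSum F (fun w _ => Set.indicator_nonneg (fun _ _ => by positivity) w)
            (hasSum_subtype_iff_indicator.1 hs)
        _ ≤ M := hsM
    obtain ⟨T, hT⟩ := exists_clm_coe_eq_rowMulVec hM hcard hzero hcol
    refine ⟨T, fun v => hasSum_smul_single_iff.2 ⟨fun u => ?_, fun w hw => ?_⟩⟩
    · rw [hT, rowMulVec_single hzero]
      exact if_pos u.2
    · rw [hT, rowMulVec_single hzero]
      exact if_neg hw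

/-- Boundedness criterion for the multiplication operator `T_{p_i}` on `ℋ²(β)`,
transported to `ℓ²(V)`: the β-weighted shift on the graph exists as a bounded operator
iff `sup_v Σ_{u ∈ Chi(v)} β(u)²/β(v)² < ∞`, assuming every parent set has at most `k`
elements. -/
theorem stmt_3 {V : Type*} [DecidableEq V] (E : V → V → Prop) (k : ℕ)
    (hparfin : ∀ v : V, {u | E u v}.Finite)
    (hparcard : ∀ v : V, Set.ncard {u | E u v} ≤ k)
    (β : V → ℝ) (hβ : ∀ v : V, 0 < β v) :
    (∃ T : lp (fun _ : V => ℂ) 2 →L[ℂ] lp (fun _ : V => ℂ) 2,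
        ∀ v : V,
          HasSum
            (fun u : {w | E v w} => ((β (u : V) / β v : ℝ) : ℂ) • lp.single 2 (u : V) (1 : ℂ))
            (T (lp.single 2 v 1))) ↔
      (∃ M : ℝ, 0 ≤ M ∧ ∀ v : V,
        ∃ s : ℝ, HasSum (fun u : {w | E v w} => (β (u : V)) ^ 2 / (β v) ^ 2) s ∧ s ≤ M) :=
  stmt_3_general E k hparfin hparcard β
end

section
/- Let V be a type, E : V → V → Prop a directed graph, and β : V → ℝ with β v > 0 for all v. Suppose Λ : ℓ²(V) → ℓ²(V) is a bounded linear operator such that for every v ∈ V, Λ χ_v = Σ_{u ∈ Chi(v)} (β u / β v) • χ_u, the sum converging in ℓ²(V). Then the Hilbert-space adjoint Λ† satisfies, for every v ∈ V, Λ† χ_v = Σ_{u ∈ Par(v)} (β v / β u) • χ_u, the sum converging in ℓ²(V); in particular Λ† χ_v = 0 whenever v is a root (Par(v) = ∅). -/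
/-! Both series are expansions in the orthonormal basis `χ`, so each is equivalent to a formula for
the coordinates of its sum. The `u`-th coordinate of `Λ† χ_v` is `⟪Λ χ_u, χ_v⟫`, the conjugate of
the `v`-th coordinate of `Λ χ_u`, which is the real number `β v / β u` if `E u v` and `0` otherwise. -/

open scoped InnerProductSpace ComplexConjugate

namespace lp

variable {ι : Type*} [DecidableEq ι] {𝕜 : Type*} {p : ENNReal} [Fact (1 ≤ p)]

theorem hasSum_single_iff [NormedRing 𝕜] (hp : p ≠ ⊤) {f : ι → 𝕜}
    {x : lp (fun _ : ι => 𝕜) p} :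
    HasSum (fun i => lp.single p i (f i)) x ↔ ⇑x = f := by
  refine ⟨fun h => funext fun j => ?_, fun hx => hx ▸ lp.hasSum_single hp x⟩
  have hj := Pi.hasSum.1 (h.map (coeFnAddMonoidHom _ p) uniformContinuous_coe.continuous) j
  refine hj.unique (hasSum_single j fun i hij => ?_) |>.trans ?_
  · exact lp.single_apply_ne (E := fun _ => 𝕜) p i (f i) (Ne.symm hij)
  · exact lp.single_apply_self (E := fun _ => 𝕜) p j (f j)

theorem hasSum_subtype_smul_single_iff [NormedRing 𝕜] (hp : p ≠ ⊤) {s : Set ι} {c : ι → 𝕜}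
    {x : lp (fun _ : ι => 𝕜) p} :
    HasSum (fun i : s => c i • lp.single p (i : ι) (1 : 𝕜)) x ↔ ⇑x = s.indicator c := by
  have h : (fun i => lp.single p i (s.indicator c i)) =
      s.indicator (fun i => c i • lp.single p i (1 : 𝕜)) := by
    ext1 i
    by_cases hi : i ∈ s <;> simp [hi, ← lp.single_smul]
  rw [← hasSum_single_iff hp, h, ← hasSum_subtype_iff_indicator]
  rfl

theorem adjoint_single_apply [RCLike 𝕜] (T : lp (fun _ : ι => 𝕜) 2 →L[𝕜] lp (fun _ : ι => 𝕜) 2)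
    (i j : ι) : T.adjoint (lp.single 2 i 1) j = conj (T (lp.single 2 j 1) i) := by
  calc T.adjoint (lp.single 2 i 1) j = ⟪lp.single 2 j 1, T.adjoint (lp.single 2 i 1)⟫_𝕜 := by
        rw [inner_single_left]; simp
    _ = ⟪T (lp.single 2 j 1), lp.single 2 i 1⟫_𝕜 := T.adjoint_inner_right _ _
    _ = conj (T (lp.single 2 j 1) i) := by rw [inner_single_right]; simp

end lp

theorem stmt_4_general {V : Type*} [DecidableEq V] (E : V → V → Prop)
    (β : V → ℝ)
    (Λ : lp (fun _ : V => ℂ) 2 →L[ℂ] lp (fun _ : V => ℂ) 2)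
    (hΛ : ∀ v : V,
      HasSum
        (fun u : {w | E v w} => ((β (u : V) / β v : ℝ) : ℂ) • lp.single 2 (u : V) (1 : ℂ))
        (Λ (lp.single 2 v 1))) :
    (∀ v : V,
      HasSum
        (fun u : {w | E w v} => ((β v / β (u : V) : ℝ) : ℂ) • lp.single 2 (u : V) (1 : ℂ))
        (ContinuousLinearMap.adjoint Λ (lp.single 2 v 1))) ∧
    (∀ v : V, {u | E u v} = ∅ →
      ContinuousLinearMap.adjoint Λ (lp.single 2 v 1) = 0) := by
  have hp : (2 : ENNReal) ≠ ⊤ := ENNReal.ofNat_ne_top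
  have hadj (v : V) : ⇑(Λ.adjoint (lp.single 2 v 1)) =
      {u | E u v}.indicator fun u => ((β v / β u : ℝ) : ℂ) := by
    ext u
    rw [lp.adjoint_single_apply,
      (lp.hasSum_subtype_smul_single_iff (c := fun w => ((β w / β u : ℝ) : ℂ)) hp).1 (hΛ u)]
    by_cases huv : E u v <;> simp [huv]
  refine ⟨fun v => (lp.hasSum_subtype_smul_single_iff (c := fun u => ((β v / β u : ℝ) : ℂ)) hp).2
    (hadj v), fun v hv => lp.ext ?_⟩
  rw [hadj, hv, Set.indicator_empty]
  rfl

/-- The adjoint of a β-weighted shift on a directed graph: if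
`Λ χ_v = Σ_{u ∈ Chi(v)} (β u / β v) • χ_u` for every `v`, then
`Λ† χ_v = Σ_{u ∈ Par(v)} (β v / β u) • χ_u`; in particular `Λ† χ_v = 0` at roots. -/
theorem stmt_4 {V : Type*} [DecidableEq V] (E : V → V → Prop)
    (β : V → ℝ) (hβ : ∀ v : V, 0 < β v)
    (Λ : lp (fun _ : V => ℂ) 2 →L[ℂ] lp (fun _ : V => ℂ) 2)
    (hΛ : ∀ v : V,
      HasSum
        (fun u : {w | E v w} => ((β (u : V) / β v : ℝ) : ℂ) • lp.single 2 (u : V) (1 : ℂ))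
        (Λ (lp.single 2 v 1))) :
    (∀ v : V,
      HasSum
        (fun u : {w | E w v} => ((β v / β (u : V) : ℝ) : ℂ) • lp.single 2 (u : V) (1 : ℂ))
        (ContinuousLinearMap.adjoint Λ (lp.single 2 v 1))) ∧
    (∀ v : V, {u | E u v} = ∅ →
      ContinuousLinearMap.adjoint Λ (lp.single 2 v 1) = 0) :=
  stmt_4_general E β Λ hΛ
end

section
/- Let n ∈ ℕ, V a type, E : V → V → Prop a directed graph in which every children set Chi(v) is finite, and β : V → ℝ with β v > 0 for all v. Let p and S v (v ∈ V) be polynomials in MvPolynomial (Fin n) ℂ satisfying p * S v = Σ_{u ∈ Chi(v)} S u (a finite sum) for every v ∈ V. Let Λ : ℓ²(V) → ℓ²(V) be a bounded linear operator with Λ χ_v = Σ_{u ∈ Chi(v)} (β u / β v) • χ_u for all v. Let w : Fin n → ℂ be such that the family (‖MvPolynomial.eval w (S v)‖²/(β v)²)_{v ∈ V} is summable, and let γ_w ∈ ℓ²(V) be the element whose v-th coordinate is conj (MvPolynomial.eval w (S v)) / (β v). Then the adjoint of Λ satisfies Λ† γ_w = conj (MvPolynomial.eval w p) • γ_w, i.e.,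 conj(p(w)) is an eigenvalue of the adjoint of the multiplication operator T_p with eigenvector corresponding to the reproducing kernel at the bounded point evaluation w. -/
open scoped ComplexConjugate InnerProductSpace

/-! `Λ† γ_w` is computed coordinatewise: `(Λ† γ)(v) = ⟪Λ χ_v, γ⟫`, and expanding `Λ χ_v` over the
children of `v` turns this into `Σ_{u ∈ Chi v} conj (S u (w)) / β v = conj ((p * S v)(w)) / β v`. -/

section

variable {ι κ 𝕜 : Type*} [RCLike 𝕜] [DecidableEq ι]

theorem lp.apply_eq_inner_single (x : lp (fun _ : ι => 𝕜) 2) (i : ι) :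
    x i = ⟪lp.single 2 i (1 : 𝕜), x⟫_𝕜 := by
  simp [lp.inner_single_left]

theorem ContinuousLinearMap.hasSum_adjoint_apply
    {T : lp (fun _ : ι => 𝕜) 2 →L[𝕜] lp (fun _ : ι => 𝕜) 2} {i : ι} {f : κ → ι} {c : κ → 𝕜}
    (hT : HasSum (fun k => c k • lp.single 2 (f k) (1 : 𝕜)) (T (lp.single 2 i 1)))
    (x : lp (fun _ : ι => 𝕜) 2) :
    HasSum (fun k => conj (c k) * x (f k)) (adjoint T x i) := by
  have hinner : HasSum (fun k => c k * conj (x (f k))) ⟪x, T (lp.single 2 i 1)⟫_𝕜 := by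
    simpa [inner_smul_right, lp.inner_single_right] using hT.mapL (innerSL 𝕜 x)
  rw [lp.apply_eq_inner_single, adjoint_inner_right, ← inner_conj_symm]
  simpa using (RCLike.hasSum_conj' 𝕜).mpr hinner

end

theorem stmt_8_general {V : Type*} [DecidableEq V] (n : ℕ) (E : V → V → Prop)
    (hfin : ∀ v : V, {u | E v u}.Finite)
    (β : V → ℝ) (hβ : ∀ v : V, 0 < β v)
    (p : MvPolynomial (Fin n) ℂ) (S : V → MvPolynomial (Fin n) ℂ)
    (hpS : ∀ v : V, p * S v = ∑ u ∈ (hfin v).toFinset, S u)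
    (Λ : lp (fun _ : V => ℂ) 2 →L[ℂ] lp (fun _ : V => ℂ) 2)
    (hΛ : ∀ v : V,
      HasSum
        (fun u : {u | E v u} => ((β (u : V) / β v : ℝ) : ℂ) • lp.single 2 (u : V) (1 : ℂ))
        (Λ (lp.single 2 v 1)))
    (w : Fin n → ℂ)
    (γ : lp (fun _ : V => ℂ) 2)
    (hγ : ∀ v : V, γ v = (starRingEnd ℂ) (MvPolynomial.eval w (S v)) / (β v : ℂ)) :
    ContinuousLinearMap.adjoint Λ γ = (starRingEnd ℂ) (MvPolynomial.eval w p) • γ := by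
  ext v
  have hβ₀ : ∀ u, (β u : ℂ) ≠ 0 := fun u => by exact_mod_cast (hβ u).ne'
  have hterm : ∀ u : {u | E v u}, conj ((β u / β v : ℝ) : ℂ) * γ u
      = conj (MvPolynomial.eval w (S u)) / β v := fun u => by
    rw [hγ, Complex.conj_ofReal]
    push_cast
    field_simp [hβ₀ u, hβ₀ v]
  have hsum : HasSum (fun u : {u | E v u} => conj (MvPolynomial.eval w (S u)) / β v)
      (conj (MvPolynomial.eval w (p * S v)) / β v) := by
    have := (hfin v).fintype
    rw [hpS, map_sum, map_sum, Finset.sum_div,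
      Finset.sum_subtype _ fun _ => (hfin v).mem_toFinset]
    exact hasSum_fintype _
  calc ContinuousLinearMap.adjoint Λ γ v = conj (MvPolynomial.eval w (p * S v)) / β v :=
        (ContinuousLinearMap.hasSum_adjoint_apply (hΛ v) γ).unique ((funext hterm).symm ▸ hsum)
    _ = _ := by rw [lp.coeFn_smul, Pi.smul_apply, hγ, map_mul, map_mul, smul_eq_mul, mul_div_assoc]

/-- `conj(p(w))` is an eigenvalue of the adjoint of the multiplication operator `T_p`
(realized as the β-weighted shift `Λ` on `ℓ²(V)`), with eigenvector the reproducing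
kernel vector `γ_w` at a bounded point evaluation `w`. -/
theorem stmt_8 {V : Type*} [DecidableEq V] (n : ℕ) (E : V → V → Prop)
    (hfin : ∀ v : V, {u | E v u}.Finite)
    (β : V → ℝ) (hβ : ∀ v : V, 0 < β v)
    (p : MvPolynomial (Fin n) ℂ) (S : V → MvPolynomial (Fin n) ℂ)
    (hpS : ∀ v : V, p * S v = ∑ u ∈ (hfin v).toFinset, S u)
    (Λ : lp (fun _ : V => ℂ) 2 →L[ℂ] lp (fun _ : V => ℂ) 2)
    (hΛ : ∀ v : V,
      HasSum
        (fun u : {u | E v u} => ((β (u : V) / β v : ℝ) : ℂ) • lp.single 2 (u : V) (1 : ℂ))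
        (Λ (lp.single 2 v 1)))
    (w : Fin n → ℂ)
    (hw : Summable fun v : V => ‖MvPolynomial.eval w (S v)‖ ^ 2 / (β v) ^ 2)
    (γ : lp (fun _ : V => ℂ) 2)
    (hγ : ∀ v : V, γ v = (starRingEnd ℂ) (MvPolynomial.eval w (S v)) / (β v : ℂ)) :
    ContinuousLinearMap.adjoint Λ γ = (starRingEnd ℂ) (MvPolynomial.eval w p) • γ :=
  stmt_8_general n E hfin β hβ p S hpS Λ hΛ w γ hγ
end

section
/- Fix n ≥ 1 and 1 ≤ k ≤ n. Let P_anti = {u : Fin n → ℕ | u is strictly decreasing, i.e., StrictAnti u}, and define the relation E on P_anti by: E u v if and only if (∀ j, u j ≤ v j ∧ v j ≤ u j + 1) and Σ_j (v j − u j) = k. Then the directed graph (P_anti, E) is a generalized directed semi-tree with parameter m_k ≤ Nat.choose n k; explicitly: (a) E has no circuit, i.e., there is no u ∈ P_anti with Relation.TransGen E u u, and (b) for all distinct u, v ∈ P_anti, the set Chi(u) ∩ Chi(v) = {w | E u w ∧ E v w} has at most Nat.choose n k elements (the countability of the set of connected components being automatic since P_anti is countable). -/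
/-! Adding a 0/1 vector with `k ≥ 1` ones raises the coordinate sum by `k`, so the coordinate
sum strictly increases along every edge and no circuit can exist. A child `w` of `u` is
determined by the set of coordinates where it exceeds `u`, which is a `k`-subset of `Fin n`;
hence already the children of a single vertex number at most `n.choose k`. -/

open Finset Relation

theorem not_transGen_self_of_lt_of_rel {α β : Type*} [Preorder β] {r : α → α → Prop}
    (f : α → β) (hf : ∀ a b, r a b → f a < f b) (a : α) : ¬ TransGen r a a := fun h =>
  lt_irrefl (f a) <| by
    simpa only [transGen_eq_self] using TransGen.lift (p := (· < ·)) f hf a a h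

section UnitSteps

variable {ι : Type*} [Fintype ι]

/-- The paper's `I_u^{(k)}`: `u` plus a 0/1 vector with exactly `k` ones. -/
def unitSteps (u : ι → ℕ) (k : ℕ) : Set (ι → ℕ) :=
  {w | (∀ j, u j ≤ w j ∧ w j ≤ u j + 1) ∧ ∑ j, (w j - u j) = k}

theorem sum_eq_add_of_mem_unitSteps {u w : ι → ℕ} {k : ℕ} (hw : w ∈ unitSteps u k) :
    ∑ j, w j = ∑ j, u j + k := by
  rw [← hw.2, sum_tsub_distrib _ fun j _ => (hw.1 j).1,
    Nat.add_sub_cancel' (sum_le_sum fun j _ => (hw.1 j).1)]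

def raisedCoords (u w : ι → ℕ) : Finset ι := {j | w j = u j + 1}

theorem card_raisedCoords {u w : ι → ℕ} {k : ℕ} (hw : w ∈ unitSteps u k) :
    #(raisedCoords u w) = k := by
  rw [raisedCoords, card_filter, ← hw.2]
  refine sum_congr rfl fun j _ => ?_
  have := hw.1 j
  split_ifs <;> omega

theorem injOn_raisedCoords (u : ι → ℕ) (k : ℕ) : Set.InjOn (raisedCoords u) (unitSteps u k) := by
  intro w hw w' hw' heq
  funext j
  have hj : w j = u j + 1 ↔ w' j = u j + 1 := by
    simpa [raisedCoords] using congrArg (j ∈ ·) heq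
  have := hw.1 j
  have := hw'.1 j
  omega

theorem mapsTo_raisedCoords (u : ι → ℕ) (k : ℕ) :
    Set.MapsTo (raisedCoords u) (unitSteps u k) ↑(powersetCard k (univ : Finset ι)) :=
  fun _ hw => mem_powersetCard.2 ⟨subset_univ _, card_raisedCoords hw⟩

theorem finite_unitSteps (u : ι → ℕ) (k : ℕ) : (unitSteps u k).Finite :=
  .of_injOn (mapsTo_raisedCoords u k) (injOn_raisedCoords u k) (finite_toSet _)

theorem ncard_unitSteps_le (u : ι → ℕ) (k : ℕ) :
    (unitSteps u k).ncard ≤ (Fintype.card ι).choose k := by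
  calc (unitSteps u k).ncard
      ≤ (↑(powersetCard k (univ : Finset ι)) : Set (Finset ι)).ncard :=
        Set.ncard_le_ncard_of_injOn _ (mapsTo_raisedCoords u k) (injOn_raisedCoords u k)
    _ = (Fintype.card ι).choose k := by
        rw [Set.ncard_coe_finset, card_powersetCard, card_univ]

end UnitSteps

theorem stmt_11_general (n k : ℕ) (hk : 1 ≤ k)
    (E : {u : Fin n → ℕ // StrictAnti u} → {u : Fin n → ℕ // StrictAnti u} → Prop)
    (hE : ∀ u v : {u : Fin n → ℕ // StrictAnti u},
      E u v ↔ (∀ j : Fin n, u.1 j ≤ v.1 j ∧ v.1 j ≤ u.1 j + 1) ∧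
        (∑ j : Fin n, (v.1 j - u.1 j)) = k) :
    (¬ ∃ u : {u : Fin n → ℕ // StrictAnti u}, Relation.TransGen E u u) ∧
    ∀ u v : {u : Fin n → ℕ // StrictAnti u}, u ≠ v →
      Set.ncard {w | E u w ∧ E v w} ≤ Nat.choose n k := by
  have hstep : ∀ u w, E u w → w.1 ∈ unitSteps u.1 k := fun u w => (hE u w).1
  refine ⟨fun ⟨u, hu⟩ => ?_, fun u v _ => ?_⟩
  · refine not_transGen_self_of_lt_of_rel (fun u => ∑ j, u.1 j) (fun a b hab => ?_) u hu
    rw [sum_eq_add_of_mem_unitSteps (hstep a b hab)]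
    omega
  · calc Set.ncard {w | E u w ∧ E v w}
        ≤ (unitSteps u.1 k).ncard :=
          Set.ncard_le_ncard_of_injOn Subtype.val (fun w hw => hstep u w hw.1)
            Subtype.val_injective.injOn (finite_unitSteps u.1 k)
      _ ≤ n.choose k := by simpa using ncard_unitSteps_le u.1 k

/-- The directed graph `G_anti^{(k)}` on the strictly decreasing tuples `P_anti`,
with edges given by adding a 0/1 vector with exactly `k` ones, is a generalized
directed semi-tree with parameter `m_k ≤ n.choose k`: it has no circuit and any two
distinct vertices have at most `n.choose k` common children. -/
theorem stmt_11 (n k : ℕ) (hn : 1 ≤ n) (hk : 1 ≤ k) (hkn : k ≤ n)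
    (E : {u : Fin n → ℕ // StrictAnti u} → {u : Fin n → ℕ // StrictAnti u} → Prop)
    (hE : ∀ u v : {u : Fin n → ℕ // StrictAnti u},
      E u v ↔ (∀ j : Fin n, u.1 j ≤ v.1 j ∧ v.1 j ≤ u.1 j + 1) ∧
        (∑ j : Fin n, (v.1 j - u.1 j)) = k) :
    (¬ ∃ u : {u : Fin n → ℕ // StrictAnti u}, Relation.TransGen E u u) ∧
    ∀ u v : {u : Fin n → ℕ // StrictAnti u}, u ≠ v →
      Set.ncard {w | E u w ∧ E v w} ≤ Nat.choose n k :=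
  stmt_11_general n k hk E hE
end

section
/- Fix n ≥ 1 and 1 ≤ k ≤ n. Let P_sym = {u : Fin n → ℕ | u is nonincreasing, i.e., i ≤ j → u j ≤ u i}, and define the relation E on P_sym by: E u v if and only if (∀ j, u j ≤ v j ∧ v j ≤ u j + 1) and Σ_j (v j − u j) = k. Then the directed graph (P_sym, E) is a generalized directed semi-tree with parameter r_k ≤ Nat.choose n k; explicitly: (a) E has no circuit, i.e., there is no u ∈ P_sym with Relation.TransGen E u u, and (b) for all distinct u, v ∈ P_sym, the set Chi(u) ∩ Chi(v) = {w | E u w ∧ E v w} has at most Nat.choose n k elements (the countability of the set of connected components being automatic since P_sym is countable). -/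
/-!
Every edge raises the coordinate sum by `k ≥ 1`, so the sum is a strictly increasing
potential along paths and there is no circuit. A child `w` of `u` is determined by the
`k`-set `{j | u j < w j}`, so already `Chi(u)` has at most `n.choose k` elements.
-/

open Finset

theorem Relation.not_transGen_self_of_lt {α β : Type*} [Preorder β] {r : α → α → Prop}
    (f : α → β) (hf : ∀ a b, r a b → f a < f b) (a : α) : ¬ Relation.TransGen r a a := by
  intro h
  have hlt : Relation.TransGen (· < ·) (f a) (f a) := Relation.TransGen.lift f hf a a h
  rw [Relation.transGen_eq_self] at hlt
  exact lt_irrefl _ hlt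

section ZeroOneStep

variable {ι : Type*} [Fintype ι]

def IsZeroOneStep (k : ℕ) (u v : ι → ℕ) : Prop :=
  (∀ j, u j ≤ v j ∧ v j ≤ u j + 1) ∧ ∑ j, (v j - u j) = k

namespace IsZeroOneStep

variable {k : ℕ} {u v w : ι → ℕ}

theorem sum_eq (h : IsZeroOneStep k u v) : ∑ j, v j = ∑ j, u j + k := by
  rw [← h.2, ← sum_add_distrib]
  exact sum_congr rfl fun j _ => (Nat.add_sub_of_le (h.1 j).1).symm

theorem card_filter_lt [DecidableEq ι] (h : IsZeroOneStep k u v) : #{j | u j < v j} = k := by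
  rw [card_filter, ← h.2]
  refine sum_congr rfl fun j _ => ?_
  have := h.1 j
  split <;> omega

theorem eq_of_filter_lt_eq [DecidableEq ι] (hv : IsZeroOneStep k u v) (hw : IsZeroOneStep k u w)
    (hvw : ({j | u j < v j} : Finset ι) = ({j | u j < w j} : Finset ι)) : v = w := by
  funext j
  have hj : u j < v j ↔ u j < w j := by simpa using congrArg (j ∈ ·) hvw
  have := hv.1 j
  have := hw.1 j
  omega

end IsZeroOneStep

theorem ncard_le_choose_of_isZeroOneStep {k : ℕ} {u : ι → ℕ} {s : Set (ι → ℕ)}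
    (hs : ∀ v ∈ s, IsZeroOneStep k u v) : s.ncard ≤ (Fintype.card ι).choose k := by
  classical
  calc s.ncard ≤ (powersetCard k (univ : Finset ι) : Set (Finset ι)).ncard :=
        Set.ncard_le_ncard_of_injOn (fun v => ({j | u j < v j} : Finset ι))
          (fun v hv => by simpa [mem_powersetCard_univ] using (hs v hv).card_filter_lt)
          (fun v hv w hw hvw => (hs v hv).eq_of_filter_lt_eq (hs w hw) hvw)
    _ = (Fintype.card ι).choose k := by
        rw [Set.ncard_coe_finset, card_powersetCard, card_univ]

end ZeroOneStep

theorem stmt_12_general (n k : ℕ) (hk : 1 ≤ k)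
    (E : {u : Fin n → ℕ // Antitone u} → {u : Fin n → ℕ // Antitone u} → Prop)
    (hE : ∀ u v : {u : Fin n → ℕ // Antitone u},
      E u v ↔ (∀ j : Fin n, u.1 j ≤ v.1 j ∧ v.1 j ≤ u.1 j + 1) ∧
        (∑ j : Fin n, (v.1 j - u.1 j)) = k) :
    (¬ ∃ u : {u : Fin n → ℕ // Antitone u}, Relation.TransGen E u u) ∧
    ∀ u v : {u : Fin n → ℕ // Antitone u}, u ≠ v →
      Set.ncard {w | E u w ∧ E v w} ≤ Nat.choose n k := by
  have hstep : ∀ u w, E u w → IsZeroOneStep k u.1 w.1 := fun u w => (hE u w).1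
  refine ⟨fun ⟨u, hu⟩ => ?_, fun u v _ => ?_⟩
  · refine Relation.not_transGen_self_of_lt (fun w => ∑ j, w.1 j) (fun a b hab => ?_) u hu
    rw [(hstep a b hab).sum_eq]
    omega
  · rw [← Set.ncard_image_of_injective _ Subtype.val_injective]
    simpa using ncard_le_choose_of_isZeroOneStep (u := u.1) (by
      rintro _ ⟨w, hw, rfl⟩
      exact hstep u w hw.1)

/-- The directed graph `G_sym^{(k)}` on the nonincreasing tuples (partitions) `P_sym`,
with edges given by adding a 0/1 vector with exactly `k` ones, is a generalized
directed semi-tree with parameter `r_k ≤ n.choose k`: it has no circuit and any two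
distinct vertices have at most `n.choose k` common children. -/
theorem stmt_12 (n k : ℕ) (hn : 1 ≤ n) (hk : 1 ≤ k) (hkn : k ≤ n)
    (E : {u : Fin n → ℕ // Antitone u} → {u : Fin n → ℕ // Antitone u} → Prop)
    (hE : ∀ u v : {u : Fin n → ℕ // Antitone u},
      E u v ↔ (∀ j : Fin n, u.1 j ≤ v.1 j ∧ v.1 j ≤ u.1 j + 1) ∧
        (∑ j : Fin n, (v.1 j - u.1 j)) = k) :
    (¬ ∃ u : {u : Fin n → ℕ // Antitone u}, Relation.TransGen E u u) ∧
    ∀ u v : {u : Fin n → ℕ // Antitone u}, u ≠ v →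
      Set.ncard {w | E u w ∧ E v w} ≤ Nat.choose n k :=
  stmt_12_general n k hk E hE
end

section
/- Let n ≥ 1 and 1 ≤ k ≤ n, and let u : Fin n → ℕ be strictly decreasing (StrictAnti u). In the polynomial ring MvPolynomial (Fin n) ℂ, let a_u denote the determinant of the n×n matrix whose (i,j)-entry is (X j)^(u i), and let s_k := MvPolynomial.esymm (Fin n) ℂ k be the k-th elementary symmetric polynomial. Then s_k * a_u = Σ_{v ∈ I_u^{(k),anti}} a_v, where I_u^{(k),anti} is the (finite) set of strictly decreasing v : Fin n → ℕ with u j ≤ v j ≤ u j + 1 for all j and Σ_j (v j − u j) = k. -/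
open MvPolynomial Finset

/-!
Write `a_u = ∑_σ sgn σ • σ(x^u)`. Since `s_k` is symmetric it commutes with every `σ`, and
`s_k x^u = ∑_{|T| = k} x^(u + ε_T)` with `ε_T` the indicator vector of `T`; hence
`s_k a_u = ∑_{|T| = k} a_(u + ε_T)`. For strictly decreasing `u` every `u + ε_T` is weakly
decreasing, so it is either strictly decreasing or has two equal entries, and then
`a_(u + ε_T)` has two equal rows and vanishes. The surviving `T` correspond bijectively to the
`v` of the statement via `v = u + ε_T`.
-/

/-- The antisymmetrized monomial `a_u = det((X_j)^(u_i))`. -/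
noncomputable def antiMonomial (n : ℕ) (u : Fin n → ℕ) : MvPolynomial (Fin n) ℂ :=
  Matrix.det (Matrix.of fun i j : Fin n => (MvPolynomial.X j : MvPolynomial (Fin n) ℂ) ^ u i)

section AddIndicator

variable {ι : Type*} [DecidableEq ι]

def addIndicator (u : ι → ℕ) (T : Finset ι) : ι → ℕ := fun i => u i + if i ∈ T then 1 else 0

lemma addIndicator_injective (u : ι → ℕ) : Function.Injective (addIndicator u) := by
  intro S T h
  ext i
  have := congrFun h i
  by_cases hS : i ∈ S <;> by_cases hT : i ∈ T <;> simp_all [addIndicator]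

lemma addIndicator_sub_self (u : ι → ℕ) (T : Finset ι) (i : ι) :
    addIndicator u T i - u i = if i ∈ T then 1 else 0 := by
  simp [addIndicator]

lemma sum_addIndicator_sub_self [Fintype ι] (u : ι → ℕ) (T : Finset ι) :
    ∑ i, (addIndicator u T i - u i) = #T := by
  simp [addIndicator_sub_self]

lemma addIndicator_filter_lt {u v : ι → ℕ} [Fintype ι] (hv : ∀ i, u i ≤ v i ∧ v i ≤ u i + 1) :
    addIndicator u {i | u i < v i} = v := by
  funext i
  have := hv i
  simp only [addIndicator, mem_filter, mem_univ, true_and]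
  split <;> omega

lemma StrictAnti.antitone_addIndicator [PartialOrder ι] {u : ι → ℕ} (hu : StrictAnti u)
    (T : Finset ι) :
    Antitone (addIndicator u T) := by
  intro i j hij
  rcases hij.eq_or_lt with rfl | hlt
  · exact le_rfl
  · have := hu hlt
    simp only [addIndicator]
    split <;> split <;> omega

lemma prod_X_mul_prod_X_pow [Fintype ι] {R : Type*} [CommSemiring R] (u : ι → ℕ)
    (T : Finset ι) :
    (∏ i ∈ T, X i) * ∏ i, X i ^ u i = ∏ i, (X i : MvPolynomial ι R) ^ addIndicator u T i := by
  simp only [addIndicator, pow_add, prod_mul_distrib, pow_ite, pow_one, pow_zero, prod_ite_mem,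
    univ_inter]
  ring

lemma esymm_mul_prod_X_pow [Fintype ι] {R : Type*} [CommSemiring R] (k : ℕ) (u : ι → ℕ) :
    esymm ι R k * ∏ i, X i ^ u i =
      ∑ T ∈ powersetCard k univ, ∏ i, X i ^ addIndicator u T i := by
  simp only [esymm, sum_mul, prod_X_mul_prod_X_pow]

end AddIndicator

lemma antiMonomial_eq_sum_rename (n : ℕ) (u : Fin n → ℕ) :
    antiMonomial n u =
      ∑ σ : Equiv.Perm (Fin n), Equiv.Perm.sign σ • rename σ (∏ i, X i ^ u i) := by
  rw [antiMonomial, ← Matrix.det_transpose, Matrix.det_apply]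
  simp [map_prod]

lemma antiMonomial_eq_zero_of_not_injective {n : ℕ} {u : Fin n → ℕ}
    (h : ¬ Function.Injective u) : antiMonomial n u = 0 := by
  obtain ⟨i, j, hij, hne⟩ : ∃ i j, u i = u j ∧ i ≠ j := by
    simpa [Function.Injective] using h
  exact Matrix.det_zero_of_row_eq hne (by funext c; simp [hij])

lemma esymm_mul_antiMonomial (n k : ℕ) (u : Fin n → ℕ) :
    esymm (Fin n) ℂ k * antiMonomial n u =
      ∑ T ∈ powersetCard k univ, antiMonomial n (addIndicator u T) := by
  simp only [antiMonomial_eq_sum_rename, mul_sum, mul_smul_comm]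
  rw [sum_comm]
  refine sum_congr rfl fun σ _ => ?_
  rw [← (esymm_isSymmetric (Fin n) ℂ k) σ, ← map_mul, esymm_mul_prod_X_pow, map_sum, smul_sum]

theorem stmt_13_general (n k : ℕ)
    (u : Fin n → ℕ) (hu : StrictAnti u)
    (hfin : Set.Finite {v : Fin n → ℕ | StrictAnti v ∧
      (∀ j : Fin n, u j ≤ v j ∧ v j ≤ u j + 1) ∧ (∑ j : Fin n, (v j - u j)) = k}) :
    MvPolynomial.esymm (Fin n) ℂ k * antiMonomial n u =
      ∑ v ∈ hfin.toFinset, antiMonomial n v := by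
  have hvanish : ∀ T ∈ powersetCard k univ, antiMonomial n (addIndicator u T) ≠ 0 →
      StrictAnti (addIndicator u T) := fun T _ h =>
    (hu.antitone_addIndicator T).strictAnti_iff_injective.2
      (not_not.1 (mt antiMonomial_eq_zero_of_not_injective h))
  have himage : hfin.toFinset =
      ((powersetCard k univ).filter fun T => StrictAnti (addIndicator u T)).image
        (addIndicator u) := by
    ext v
    simp only [Set.Finite.mem_toFinset, Set.mem_ofPred_eq, mem_image, mem_filter,
      mem_powersetCard_univ]
    constructor
    · rintro ⟨hv, hbounds, hsum⟩
      refine ⟨({i | u i < v i} : Finset (Fin n)), ⟨?_, ?_⟩, addIndicator_filter_lt hbounds⟩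
      · rw [← hsum, ← sum_addIndicator_sub_self u, addIndicator_filter_lt hbounds]
      · rwa [addIndicator_filter_lt hbounds]
    · rintro ⟨T, ⟨hT, hanti⟩, rfl⟩
      refine ⟨hanti, fun j => ?_, by rw [sum_addIndicator_sub_self, hT]⟩
      simp only [addIndicator]
      split <;> omega
  rw [esymm_mul_antiMonomial, himage, sum_image (addIndicator_injective u).injOn,
    sum_filter_of_ne hvanish]

/-- The antisymmetric form of the Pieri formula: for strictly decreasing `u`,
`s_k · a_u = Σ_{v ∈ I_u^{(k),anti}} a_v`, the sum running over the strictly decreasing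
`v` obtained from `u` by adding a 0/1 vector with exactly `k` ones. -/
theorem stmt_13 (n k : ℕ) (hn : 1 ≤ n) (hk : 1 ≤ k) (hkn : k ≤ n)
    (u : Fin n → ℕ) (hu : StrictAnti u)
    (hfin : Set.Finite {v : Fin n → ℕ | StrictAnti v ∧
      (∀ j : Fin n, u j ≤ v j ∧ v j ≤ u j + 1) ∧ (∑ j : Fin n, (v j - u j)) = k}) :
    MvPolynomial.esymm (Fin n) ℂ k * antiMonomial n u =
      ∑ v ∈ hfin.toFinset, antiMonomial n v :=
  stmt_13_general n k u hu hfin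
end

section
/- Let n ≥ 1 and 1 ≤ k ≤ n, and let u : Fin n → ℕ be nonincreasing (i ≤ j → u j ≤ u i). In MvPolynomial (Fin n) ℂ, define the monomial symmetric polynomial m_u as the sum, over the set of distinct rearrangements w of u (the orbit of u under precomposition by permutations σ ∈ Equiv.Perm (Fin n), each distinct exponent tuple counted once), of the monomial X^w = Π_j (X j)^(w j). Then there exist positive rational numbers c_v, indexed by the nonincreasing tuples v : Fin n → ℕ with u j ≤ v j ≤ u j + 1 for all j and Σ_j (v j − u j) = k, such that (MvPolynomial.esymm (Fin n) ℂ k) * m_u = Σ_v ((c_v : ℂ)) • m_v. -/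
/-- The monomial symmetric polynomial `m_u`: the sum, over the set of distinct
rearrangements of `u` (the orbit of `u` under precomposition by permutations), of the
corresponding monomial. -/
noncomputable def monSymPoly (n : ℕ) (u : Fin n → ℕ) : MvPolynomial (Fin n) ℂ :=
  ∑ w ∈ Finset.image (fun σ : Equiv.Perm (Fin n) => u ∘ σ) Finset.univ,
    ∏ j : Fin n, (MvPolynomial.X j : MvPolynomial (Fin n) ℂ) ^ w j

/-! Both sides are symmetric polynomials, so it suffices to compare their coefficients at
nonincreasing exponents `v`. The coefficient of `X^β` in `e_k · m_u` counts the pairs `(S, w)` with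
`|S| = k`, `w` a rearrangement of `u` and `β = 1_S + w`. For nonincreasing `β` such a pair forces
`u ≤ β ≤ u + 1` entrywise (sorting preserves entrywise inequalities between rearrangements) and
`|β| = |u| + k`; conversely for `v ∈ I_u^{(k)}` the pair `({j | u j < v j}, u)` exists. So the
coefficients `c_v` are these counts, which are positive integers. -/

open Finset MvPolynomial Equiv

theorem Finset.card_filter_comp_perm {ι : Type*} [Fintype ι] (p : ι → Prop) [DecidablePred p]
    (σ : Perm ι) : #{i | p (σ i)} = #{i | p i} := by
  simp only [card_filter]
  exact Equiv.sum_comp σ fun i => if p i then 1 else 0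

theorem Antitone.le_of_comp_perm_le {n : ℕ} {α : Type*} [Preorder α] {a b : Fin n → α}
    (ha : Antitone a) (hb : Antitone b) (σ : Perm (Fin n)) (h : ∀ j, a (σ j) ≤ b j) : a ≤ b := by
  classical
  intro i
  -- for antitone `f`, `c ≤ f i` iff more than `i` entries of `f` are at least `c`
  rw [← Tuple.lt_card_ge_iff_apply_ge_of_antitone hb]
  calc (i : ℕ) < #{j | a i ≤ a j} := (Tuple.lt_card_ge_iff_apply_ge_of_antitone ha).2 le_rfl
    _ = #{j | a i ≤ a (σ j)} := (card_filter_comp_perm _ σ).symm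
    _ ≤ #{j | a i ≤ b j} := card_le_card <| monotone_filter_right _ fun j _ hj => hj.trans (h j)

theorem Fin.exists_antitone_comp_perm {n : ℕ} {α : Type*} [LinearOrder α] (f : Fin n → α) :
    ∃ σ : Perm (Fin n), Antitone (f ∘ σ) :=
  ⟨Fin.revPerm.trans (Tuple.sort f), fun i j hij =>
    Tuple.monotone_sort f (by simpa using Fin.rev_le_rev.mpr hij)⟩

namespace MvPolynomial

variable {σ R : Type*} [CommSemiring R]

theorem IsSymmetric.coeff_equivMapDomain {p : MvPolynomial σ R} (hp : p.IsSymmetric)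
    (e : Perm σ) (d : σ →₀ ℕ) : coeff (d.equivMapDomain e) p = coeff d p := by
  conv_lhs => rw [← hp e]
  rw [Finsupp.equivMapDomain_eq_mapDomain, coeff_rename_mapDomain _ e.injective]

theorem IsSymmetric.ext_of_coeff_antitone {n : ℕ} {p q : MvPolynomial (Fin n) R}
    (hp : p.IsSymmetric) (hq : q.IsSymmetric)
    (h : ∀ d : Fin n →₀ ℕ, Antitone ⇑d → coeff d p = coeff d q) : p = q := by
  ext d
  obtain ⟨τ, hτ⟩ := Fin.exists_antitone_comp_perm d
  have hsorted : ⇑(d.equivMapDomain τ.symm) = d ∘ τ := by ext; simp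
  rw [← hp.coeff_equivMapDomain τ.symm, ← hq.coeff_equivMapDomain τ.symm]
  exact h _ (hsorted ▸ hτ)

end MvPolynomial

section

variable {n : ℕ}

def permOrbit (u : Fin n → ℕ) : Finset (Fin n → ℕ) :=
  univ.image fun σ : Perm (Fin n) => u ∘ σ

theorem mem_permOrbit {u w : Fin n → ℕ} : w ∈ permOrbit u ↔ ∃ σ : Perm (Fin n), u ∘ σ = w := by
  simp [permOrbit]

theorem comp_perm_mem_permOrbit {u w : Fin n → ℕ} (hw : w ∈ permOrbit u) (σ : Perm (Fin n)) :
    w ∘ σ ∈ permOrbit u := by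
  obtain ⟨τ, rfl⟩ := mem_permOrbit.mp hw
  exact mem_permOrbit.mpr ⟨σ.trans τ, rfl⟩

theorem eq_of_mem_permOrbit_of_antitone {u w : Fin n → ℕ} (hu : Antitone u) (hw : Antitone w)
    (h : w ∈ permOrbit u) : w = u := by
  obtain ⟨σ, rfl⟩ := mem_permOrbit.mp h
  exact Tuple.unique_antitone (σ := σ) (τ := 1) hw hu

theorem monSymPoly_eq_sum_monomial (u : Fin n → ℕ) :
    monSymPoly n u = ∑ w ∈ permOrbit u, monomial (Finsupp.equivFunOnFinite.symm w) 1 := by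
  refine sum_congr rfl fun w _ => ?_
  rw [monomial_eq, C_1, one_mul, Finsupp.prod_fintype _ _ (fun _ => pow_zero _)]
  rfl

theorem coeff_monSymPoly (u : Fin n → ℕ) (d : Fin n →₀ ℕ) :
    coeff d (monSymPoly n u) = if ⇑d ∈ permOrbit u then 1 else 0 := by
  simp_rw [monSymPoly_eq_sum_monomial, coeff_sum, coeff_monomial, Equiv.symm_apply_eq]
  exact sum_ite_eq' _ _ _

theorem monSymPoly_isSymmetric (u : Fin n → ℕ) : (monSymPoly n u).IsSymmetric := by
  intro e
  simp only [monSymPoly_eq_sum_monomial, map_sum, rename_monomial]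
  refine sum_nbij' (· ∘ e.symm) (· ∘ e) (fun w hw => comp_perm_mem_permOrbit hw _)
    (fun w hw => comp_perm_mem_permOrbit hw _) (fun w _ => by ext; simp)
    (fun w _ => by ext; simp) fun w _ => ?_
  rw [← Finsupp.equivMapDomain_eq_mapDomain]
  congr
  ext j
  simp

def addOnes (S : Finset (Fin n)) (w : Fin n → ℕ) : Fin n → ℕ :=
  fun j => (if j ∈ S then 1 else 0) + w j

-- `v ∈ I_u^{(k)}` iff `Antitone v ∧ IsPieriStep k u v`
def IsPieriStep (k : ℕ) (u v : Fin n → ℕ) : Prop :=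
  (∀ j, u j ≤ v j ∧ v j ≤ u j + 1) ∧ ∑ j, (v j - u j) = k

def pieriCount (k : ℕ) (u β : Fin n → ℕ) : ℕ :=
  #{p ∈ powersetCard k univ ×ˢ permOrbit u | addOnes p.1 p.2 = β}

theorem sum_single_one_add_equivFunOnFinite_symm (S : Finset (Fin n)) (w : Fin n → ℕ) :
    ∑ i ∈ S, Finsupp.single i 1 + Finsupp.equivFunOnFinite.symm w =
      Finsupp.equivFunOnFinite.symm (addOnes S w) := by
  ext j
  simp [addOnes, Finsupp.single_apply]

theorem coeff_esymm_mul_monSymPoly (k : ℕ) (u : Fin n → ℕ) (d : Fin n →₀ ℕ) :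
    coeff d (esymm (Fin n) ℂ k * monSymPoly n u) = pieriCount k u d := by
  simp_rw [esymm_eq_sum_monomial, monSymPoly_eq_sum_monomial, sum_mul_sum, monomial_mul, one_mul,
    sum_single_one_add_equivFunOnFinite_symm, coeff_sum, coeff_monomial, Equiv.symm_apply_eq]
  rw [pieriCount, card_filter, ← sum_product']
  push_cast
  rfl

theorem IsPieriStep.pieriCount_pos {k : ℕ} {u v : Fin n → ℕ} (h : IsPieriStep k u v) :
    0 < pieriCount k u v := by
  obtain ⟨hb, hs⟩ := h
  set S : Finset (Fin n) := {j | u j < v j}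
  have hS : #S = k := by
    rw [card_filter, ← hs]
    exact sum_congr rfl fun j _ => by have := hb j; split_ifs <;> omega
  have hv : addOnes S u = v := by
    ext j
    have := hb j
    simp only [addOnes, S, mem_filter, mem_univ, true_and]
    split_ifs <;> omega
  refine card_pos.mpr ⟨(S, u), mem_filter.mpr ⟨mem_product.mpr ⟨?_, ?_⟩, hv⟩⟩
  · exact mem_powersetCard_univ.mpr hS
  · exact mem_permOrbit.mpr ⟨1, rfl⟩

theorem isPieriStep_of_pieriCount_ne_zero {k : ℕ} {u v : Fin n → ℕ} (hu : Antitone u)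
    (hv : Antitone v) (h : pieriCount k u v ≠ 0) : IsPieriStep k u v := by
  obtain ⟨⟨S, w⟩, hp⟩ := card_ne_zero.mp h
  simp only [mem_filter, mem_product, mem_powersetCard_univ] at hp
  obtain ⟨⟨hS, hw⟩, rfl⟩ := hp
  obtain ⟨σ, rfl⟩ := mem_permOrbit.mp hw
  have hlow : u ≤ addOnes S (u ∘ σ) :=
    hu.le_of_comp_perm_le hv σ fun j => Nat.le_add_left _ _
  have hhigh : addOnes S (u ∘ σ) ≤ u + 1 :=
    hv.le_of_comp_perm_le (hu.add_const 1) σ.symm fun j => by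
      simp only [addOnes, Function.comp_apply, apply_symm_apply, Pi.add_apply, Pi.one_apply]
      split_ifs <;> omega
  refine ⟨fun j => ⟨hlow j, hhigh j⟩, ?_⟩
  rw [sum_tsub_distrib _ fun j _ => hlow j]
  simp [addOnes, sum_add_distrib, hS, Equiv.sum_comp σ u]

theorem coeff_sum_smul_monSymPoly {s : Finset (Fin n → ℕ)} (hs : ∀ v ∈ s, Antitone v)
    (c : (Fin n → ℕ) → ℂ) {d : Fin n →₀ ℕ} (hd : Antitone ⇑d) :
    coeff d (∑ v ∈ s, c v • monSymPoly n v) = if ⇑d ∈ s then c d else 0 := by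
  rw [coeff_sum, ← sum_ite_eq' s (⇑d) c]
  refine sum_congr rfl fun v hv => ?_
  rw [coeff_smul, coeff_monSymPoly, smul_eq_mul, mul_ite, mul_one, mul_zero]
  exact if_congr ⟨fun h => (eq_of_mem_permOrbit_of_antitone (hs v hv) hd h).symm,
    fun h => h ▸ mem_permOrbit.mpr ⟨1, rfl⟩⟩ rfl rfl

end

theorem stmt_14_general (n k : ℕ)
    (u : Fin n → ℕ) (hu : Antitone u)
    (hfin : Set.Finite {v : Fin n → ℕ | Antitone v ∧
      (∀ j : Fin n, u j ≤ v j ∧ v j ≤ u j + 1) ∧ (∑ j : Fin n, (v j - u j)) = k}) :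
    ∃ c : (Fin n → ℕ) → ℚ,
      (∀ v ∈ hfin.toFinset, 0 < c v) ∧
      MvPolynomial.esymm (Fin n) ℂ k * monSymPoly n u =
        ∑ v ∈ hfin.toFinset, ((c v : ℂ)) • monSymPoly n v := by
  refine ⟨fun v => pieriCount k u v, fun v hv => ?_, ?_⟩
  · exact Nat.cast_pos.mpr (IsPieriStep.pieriCount_pos (hfin.mem_toFinset.mp hv).2)
  have hsymm : (∑ v ∈ hfin.toFinset, ((pieriCount k u v : ℚ) : ℂ) • monSymPoly n v).IsSymmetric :=
    (mem_symmetricSubalgebra _).mp <| Subalgebra.sum_mem _ fun v _ =>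
      Subalgebra.smul_mem _ (monSymPoly_isSymmetric v) _
  refine ((esymm_isSymmetric _ _ k).mul (monSymPoly_isSymmetric u)).ext_of_coeff_antitone hsymm
    fun d hd => ?_
  rw [coeff_esymm_mul_monSymPoly,
    coeff_sum_smul_monSymPoly (fun v hv => (hfin.mem_toFinset.mp hv).1) _ hd]
  split_ifs with hmem
  · push_cast; rfl
  · have : pieriCount k u d = 0 := by
      by_contra h
      exact hmem (hfin.mem_toFinset.mpr ⟨hd, isPieriStep_of_pieriCount_ne_zero hu hd h⟩)
    simp [this]

/-- Pieri-type formula for monomial symmetric polynomials: for nonincreasing `u`,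
`s_k · m_u = Σ_v c_v m_v` with positive rational coefficients `c_v`, the sum running
over the nonincreasing `v` obtained from `u` by adding a 0/1 vector with `k` ones. -/
theorem stmt_14 (n k : ℕ) (hn : 1 ≤ n) (hk : 1 ≤ k) (hkn : k ≤ n)
    (u : Fin n → ℕ) (hu : Antitone u)
    (hfin : Set.Finite {v : Fin n → ℕ | Antitone v ∧
      (∀ j : Fin n, u j ≤ v j ∧ v j ≤ u j + 1) ∧ (∑ j : Fin n, (v j - u j)) = k}) :
    ∃ c : (Fin n → ℕ) → ℚ,
      (∀ v ∈ hfin.toFinset, 0 < c v) ∧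
      MvPolynomial.esymm (Fin n) ℂ k * monSymPoly n u =
        ∑ v ∈ hfin.toFinset, ((c v : ℂ)) • monSymPoly n v :=
  stmt_14_general n k u hu hfin
end
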